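/- Let a, h ∈ ℙ¹(ℂ), let (A_j) be a sequence of Möbius transformations of ℙ¹(ℂ) that converges to the constant map with value a locally uniformly on ℙ¹(ℂ) ∖ {h}, and let (μ_j) be a sequence of Borel probability measures on ℙ¹(ℂ) such that μ_j → μ_C weakly and (A_j)_*μ_j → μ_E weakly for some Borel probability measures μ_C, μ_E on ℙ¹(ℂ). Then μ_E({a}) ≥ μ_C(ℙ¹(ℂ) ∖ {h}) = 1 − μ_C({h}); i.e., μ_C({h}) + μ_E({a}) ≥ 1. -/

import Mathlib

/-!
STATEMENT 5.
The Riemann sphere `ℙ¹(ℂ)` is formalized as the one-point compactification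
`OnePoint ℂ` with its standard (compact Hausdorff) topology and Borel
σ-algebra.  `mobiusMap α β γ δ` is the Möbius transformation
`z ↦ (αz+β)/(γz+δ)`.  Weak convergence of Borel probability measures is
tested against continuous real-valued functions.
-/

open scoped Classical OnePoint
open Filter MeasureTheory

noncomputable instance : MeasurableSpace (OnePoint ℂ) := borel _
instance : BorelSpace (OnePoint ℂ) := ⟨rfl⟩

/-- The Möbius transformation `z ↦ (αz+β)/(γz+δ)` of the Riemann sphere. -/
noncomputable def mobiusMap (α β γ δ : ℂ) : OnePoint ℂ → OnePoint ℂ :=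
  fun p =>
    Option.elim p
      (if γ = 0 then ∞ else ((α / γ : ℂ) : OnePoint ℂ))
      (fun z => if γ * z + δ = 0 then ∞
        else (((α * z + β) / (γ * z + δ) : ℂ) : OnePoint ℂ))

/-- `A` is a Möbius transformation of the Riemann sphere. -/
def IsMobius (A : OnePoint ℂ → OnePoint ℂ) : Prop :=
  ∃ α β γ δ : ℂ, α * δ - β * γ ≠ 0 ∧ A = mobiusMap α β γ δ

/-- Weak convergence of a sequence of measures on the Riemann sphere. -/
def WeakLim (μ : ℕ → Measure (OnePoint ℂ)) (ν : Measure (OnePoint ℂ)) : Prop :=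
  ∀ φ : C(OnePoint ℂ, ℝ),
    Tendsto (fun j => ∫ x, φ x ∂(μ j)) atTop (nhds (∫ x, φ x ∂ν))

/-!
By inner regularity `μC {h}ᶜ` is approximated by `μC K` for compact `K ∌ h`, and by outer
regularity `μE {a}` by `μE U` for open `U ∋ a`. Shrinking `U` to a closed neighbourhood `F` of
`a` and thickening `K` to an open `G` whose closure still avoids `h`, local uniform convergence
gives `A j '' G ⊆ F` for large `j`, so `μ j G ≤ (A j)_* μ j F`. The portmanteau theorem
(`liminf` over open sets, `limsup` over closed sets) turns this into `μC G ≤ μE F`.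
-/

open Set Topology

instance {V : Type*} [AddCommGroup V] [Module ℝ V] [FiniteDimensional ℝ V] [TopologicalSpace V]
    [IsTopologicalAddGroup V] [ContinuousSMul ℝ V] [T2Space V] :
    TopologicalSpace.MetrizableSpace (OnePoint V) :=
  (onePointEquivSphereOfFinrankEq (ι := Fin (Module.finrank ℝ V + 1)) (by simp)).isEmbedding
    |>.metrizableSpace

theorem OnePoint.measurable_of_measurable_comp_coe {X Y : Type*} [TopologicalSpace X]
    [MeasurableSpace X] [BorelSpace X] [MeasurableSpace (OnePoint X)]
    [BorelSpace (OnePoint X)] [MeasurableSpace Y] {f : OnePoint X → Y}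
    (hf : Measurable (f ∘ ((↑) : X → OnePoint X))) : Measurable f := by
  have hext : Function.extend ((↑) : X → OnePoint X) (f ∘ (↑)) (fun _ ↦ f ∞) = f := by
    funext p
    cases p with
    | infty => exact Function.extend_apply' _ _ _ (by simp)
    | coe x => exact OnePoint.coe_injective.extend_apply _ _ x
  rw [← hext]
  exact OnePoint.isOpenEmbedding_coe.measurableEmbedding.measurable_extend hf measurable_const

theorem measurable_mobiusMap (α β γ δ : ℂ) : Measurable (mobiusMap α β γ δ) := by
  refine OnePoint.measurable_of_measurable_comp_coe (Measurable.ite ?_ measurable_const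
    (OnePoint.continuous_coe.measurable.comp (by fun_prop)))
  exact measurableSet_eq_fun (by fun_prop) measurable_const

theorem IsMobius.measurable {f : OnePoint ℂ → OnePoint ℂ} (hf : IsMobius f) :
    Measurable f := by
  obtain ⟨α, β, γ, δ, -, rfl⟩ := hf
  exact measurable_mobiusMap α β γ δ

theorem WeakLim.tendsto_probabilityMeasure {μ : ℕ → Measure (OnePoint ℂ)}
    {ν : Measure (OnePoint ℂ)} (hμ : ∀ j, IsProbabilityMeasure (μ j))
    (hν : IsProbabilityMeasure ν) (h : WeakLim μ ν) :
    Tendsto (β := ProbabilityMeasure (OnePoint ℂ)) (fun j ↦ ⟨μ j, hμ j⟩) atTop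
      (𝓝 ⟨ν, hν⟩) :=
  ProbabilityMeasure.tendsto_iff_forall_integral_tendsto.2 fun φ ↦ h φ.toContinuousMap

theorem measure_le_of_forall_isClosed_le_isOpen {X : Type*} [TopologicalSpace X]
    [MeasurableSpace X] {μ ν : Measure X} [μ.WeaklyRegular] [ν.OuterRegular] {s t : Set X}
    (hs : IsOpen s)
    (h : ∀ K ⊆ s, IsClosed K → ∀ U, t ⊆ U → IsOpen U → μ K ≤ ν U) :
    μ s ≤ ν t := by
  rw [hs.measure_eq_iSup_isClosed μ, t.measure_eq_iInf_isOpen ν]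
  exact iSup₂_le fun K hKs ↦ iSup_le fun hK ↦
    le_iInf₂ fun U htU ↦ le_iInf fun hU ↦ h K hKs hK U htU hU

namespace MeasureTheory.ProbabilityMeasure

variable {X Y ι : Type*} [TopologicalSpace X] [MeasurableSpace X] [OpensMeasurableSpace X]
  [HasOuterApproxClosed X] [TopologicalSpace Y] [MeasurableSpace Y] [OpensMeasurableSpace Y]
  [HasOuterApproxClosed Y] {L : Filter ι} [L.NeBot]

theorem measure_le_of_tendsto_of_eventually_le {μ : ι → ProbabilityMeasure X}
    {μ₀ : ProbabilityMeasure X} {ν : ι → ProbabilityMeasure Y} {ν₀ : ProbabilityMeasure Y}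
    (hμ : Tendsto μ L (𝓝 μ₀)) (hν : Tendsto ν L (𝓝 ν₀)) {G : Set X} {F : Set Y}
    (hG : IsOpen G) (hF : IsClosed F)
    (hle : ∀ᶠ i in L, (μ i : Measure X) G ≤ (ν i : Measure Y) F) :
    (μ₀ : Measure X) G ≤ (ν₀ : Measure Y) F :=
  calc (μ₀ : Measure X) G
      ≤ L.liminf fun i ↦ (μ i : Measure X) G := le_liminf_measure_open_of_tendsto hμ hG
    _ ≤ L.liminf fun i ↦ (ν i : Measure Y) F := liminf_le_liminf hle
    _ ≤ L.limsup fun i ↦ (ν i : Measure Y) F := liminf_le_limsup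
    _ ≤ (ν₀ : Measure Y) F := limsup_measure_closed_le_of_tendsto hν hF

theorem measure_le_of_tendsto_map_of_eventually_mapsTo {μ : ι → ProbabilityMeasure X}
    {μ₀ : ProbabilityMeasure X} {ν₀ : ProbabilityMeasure Y} {f : ι → X → Y}
    (hf : ∀ i, AEMeasurable (f i) (μ i)) (hμ : Tendsto μ L (𝓝 μ₀))
    (hν : Tendsto (fun i ↦ (μ i).map (hf i)) L (𝓝 ν₀)) {G : Set X} {F : Set Y}
    (hG : IsOpen G) (hF : IsClosed F) (hGF : ∀ᶠ i in L, MapsTo (f i) G F) :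
    (μ₀ : Measure X) G ≤ (ν₀ : Measure Y) F :=
  measure_le_of_tendsto_of_eventually_le hμ hν hG hF <| hGF.mono fun i hi ↦ by
    rw [map_apply' _ _ hF.measurableSet]
    exact measure_mono hi.subset_preimage

end MeasureTheory.ProbabilityMeasure

theorem statement5
    (a h : OnePoint ℂ) (A : ℕ → OnePoint ℂ → OnePoint ℂ)
    (hA : ∀ j, IsMobius (A j))
    -- `A j → (const a)` locally uniformly on `ℙ¹(ℂ) ∖ {h}`:
    (hconv : ∀ U ∈ nhds a, ∀ K : Set (OnePoint ℂ), IsCompact K → K ⊆ {h}ᶜ →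
      ∀ᶠ j in atTop, ∀ z ∈ K, A j z ∈ U)
    (μ : ℕ → Measure (OnePoint ℂ)) (hμ : ∀ j, IsProbabilityMeasure (μ j))
    (μC μE : Measure (OnePoint ℂ))
    (hμC : IsProbabilityMeasure μC) (hμE : IsProbabilityMeasure μE)
    (hlimC : WeakLim μ μC)
    (hlimE : WeakLim (fun j => Measure.map (A j) (μ j)) μE) :
    μC {h}ᶜ ≤ μE {a} ∧ μC {h}ᶜ = 1 - μC {h} ∧ 1 ≤ μC {h} + μE {a} := by
  have hP := hlimC.tendsto_probabilityMeasure hμ hμC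
  have hQ : Tendsto (β := ProbabilityMeasure (OnePoint ℂ))
      (fun j ↦ ProbabilityMeasure.map ⟨μ j, hμ j⟩ (hA j).measurable.aemeasurable)
      atTop (𝓝 ⟨μE, hμE⟩) := hlimE.tendsto_probabilityMeasure _ hμE
  have hle : μC {h}ᶜ ≤ μE {a} := by
    refine measure_le_of_forall_isClosed_le_isOpen isOpen_compl_singleton
      fun K hKh hK U haU hU ↦ ?_
    obtain ⟨G, hG, hKG, hGh⟩ :=
      hK.isCompact.exists_isOpen_closure_subset (isOpen_compl_singleton.mem_nhdsSet.2 hKh)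
    obtain ⟨F, hFa, hF, hFU⟩ := exists_mem_nhds_isClosed_subset (hU.mem_nhds (haU rfl))
    have hGF : ∀ᶠ j in atTop, MapsTo (A j) G F :=
      (hconv _ (interior_mem_nhds.2 hFa) _ isClosed_closure.isCompact hGh).mono
        fun j hj z hz ↦ interior_subset (hj z (subset_closure hz))
    calc μC K ≤ μC G := measure_mono hKG
      _ ≤ μE F :=
        ProbabilityMeasure.measure_le_of_tendsto_map_of_eventually_mapsTo _ hP hQ hG hF hGF
      _ ≤ μE U := measure_mono hFU
  refine ⟨hle, prob_compl_eq_one_sub (measurableSet_singleton h), ?_⟩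
  calc 1 = μC {h} + μC {h}ᶜ := (prob_add_prob_compl (measurableSet_singleton h)).symm
    _ ≤ μC {h} + μE {a} := add_le_add_right hle _
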